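/- In the polynomial ring ℂ[θ_1,θ_2,θ_3,ω], let χ_1,…,χ_8 be the eight linear forms ±θ_1±θ_2±θ_3 (all sign combinations). Writing σ_i for the elementary symmetric polynomials σ_i(θ_1,θ_2,θ_3), one has the identity σ_1(χ•) ω⁷ + σ_2(χ•) ω⁶ + σ_4(χ•) ω⁴ + σ_6(χ•) ω² = 2ω² ( 3σ_1⁴(4σ_2+ω²) + 8σ_3σ_1(4σ_2+ω²) − 2σ_1²(6σ_2ω² + 8σ_2² + ω⁴) + 4(σ_2ω⁴ + 2σ_2²ω² − 8σ_3²) − 2σ_1⁶ − 16σ_3σ_1³ ). (This is the generator Q̃^S_{+,2} of the kernel ideal for the three-qubit case r = 3.) -/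

import Mathlib

/-! The eight characters split into four pairs `±χ`, so `∏ (1 + χ t) = ∏ (1 - χ² t²)` over one
representative of each pair: the odd `σ_k(χ•)` vanish and `σ_{2k}(χ•) = (-1)^k σ_k(χ²)` for the
four squares. What remains is a polynomial identity in `θ₁, θ₂, θ₃, ω`. -/

open MvPolynomial

/-- `θ_1` in `ℂ[θ_1,θ_2,θ_3,ω]`. -/
noncomputable def θ₁ : MvPolynomial (Fin 4) ℂ := X 0
/-- `θ_2` in `ℂ[θ_1,θ_2,θ_3,ω]`. -/
noncomputable def θ₂ : MvPolynomial (Fin 4) ℂ := X 1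
/-- `θ_3` in `ℂ[θ_1,θ_2,θ_3,ω]`. -/
noncomputable def θ₃ : MvPolynomial (Fin 4) ℂ := X 2
/-- `ω` in `ℂ[θ_1,θ_2,θ_3,ω]`. -/
noncomputable def w : MvPolynomial (Fin 4) ℂ := X 3

/-- The multiset of the eight linear forms `±θ_1 ± θ_2 ± θ_3` (all sign combinations),
the additive characters of the `T³`-action on `ℙ_7`. -/
noncomputable def χs : Multiset (MvPolynomial (Fin 4) ℂ) :=
  {θ₁ + θ₂ + θ₃, θ₁ + θ₂ - θ₃, θ₁ - θ₂ + θ₃, -θ₁ + θ₂ + θ₃,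
   θ₁ - θ₂ - θ₃, -θ₁ + θ₂ - θ₃, -θ₁ - θ₂ + θ₃, -θ₁ - θ₂ - θ₃}

/-- `σ_1(θ) = θ_1 + θ_2 + θ_3`. -/
noncomputable def s₁ : MvPolynomial (Fin 4) ℂ := θ₁ + θ₂ + θ₃
/-- `σ_2(θ) = θ_1θ_2 + θ_1θ_3 + θ_2θ_3`. -/
noncomputable def s₂ : MvPolynomial (Fin 4) ℂ := θ₁ * θ₂ + θ₁ * θ₃ + θ₂ * θ₃
/-- `σ_3(θ) = θ_1θ_2θ_3`. -/
noncomputable def s₃ : MvPolynomial (Fin 4) ℂ := θ₁ * θ₂ * θ₃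

namespace Multiset

variable {R : Type*}

section CommSemiring

variable [CommSemiring R]

@[simp]
theorem esymm_zero_right (s : Multiset R) : s.esymm 0 = 1 := by
  simp [esymm]

@[simp]
theorem esymm_zero_left_succ (n : ℕ) : (0 : Multiset R).esymm (n + 1) = 0 := rfl

@[simp]
theorem esymm_cons_succ (a : R) (s : Multiset R) (n : ℕ) :
    (a ::ₘ s).esymm (n + 1) = s.esymm (n + 1) + a * s.esymm n := by
  simp [esymm, map_map, sum_map_mul_left]

end CommSemiring

section CommRing

variable [CommRing R]

theorem esymm_cons_neg_cons_succ_succ (a : R) (s : Multiset R) (n : ℕ) :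
    (a ::ₘ -a ::ₘ s).esymm (n + 2) = s.esymm (n + 2) - a ^ 2 * s.esymm n := by
  simp only [esymm_cons_succ]
  ring

theorem add_map_neg_cons (a : R) (s : Multiset R) :
    a ::ₘ s + (a ::ₘ s).map Neg.neg = a ::ₘ -a ::ₘ (s + s.map Neg.neg) := by
  rw [map_cons, cons_add, add_cons]

theorem esymm_add_map_neg_odd (s : Multiset R) (n : ℕ) :
    (s + s.map Neg.neg).esymm (2 * n + 1) = 0 := by
  induction s using Multiset.induction_on generalizing n with
  | empty => simp
  | cons a s ih =>
    rw [add_map_neg_cons]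
    cases n with
    | zero => simpa using ih 0
    | succ n =>
      have ih' := ih (n + 1)
      rw [show 2 * (n + 1) + 1 = 2 * n + 1 + 2 by ring] at ih' ⊢
      rw [esymm_cons_neg_cons_succ_succ, ih', ih, mul_zero, sub_zero]

theorem esymm_add_map_neg_even (s : Multiset R) (n : ℕ) :
    (s + s.map Neg.neg).esymm (2 * n) = (-1) ^ n * (s.map (· ^ 2)).esymm n := by
  induction s using Multiset.induction_on generalizing n with
  | empty => cases n <;> simp [Nat.mul_succ]
  | cons a s ih =>
    rw [add_map_neg_cons]
    cases n with
    | zero => simp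
    | succ n =>
      have ih' := ih (n + 1)
      rw [show 2 * (n + 1) = 2 * n + 2 by ring] at ih' ⊢
      rw [esymm_cons_neg_cons_succ_succ, ih', ih, map_cons, esymm_cons_succ]
      ring

end CommRing

end Multiset

noncomputable def χsHalf : Multiset (MvPolynomial (Fin 4) ℂ) :=
  {θ₁ + θ₂ + θ₃, θ₁ + θ₂ - θ₃, θ₁ - θ₂ + θ₃, -θ₁ + θ₂ + θ₃}

theorem χs_eq_add_map_neg : χs = χsHalf + χsHalf.map Neg.neg := by
  have h₁ : -θ₁ - θ₂ - θ₃ = -(θ₁ + θ₂ + θ₃) := by ring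
  have h₂ : -θ₁ - θ₂ + θ₃ = -(θ₁ + θ₂ - θ₃) := by ring
  have h₃ : -θ₁ + θ₂ - θ₃ = -(θ₁ - θ₂ + θ₃) := by ring
  have h₄ : θ₁ - θ₂ - θ₃ = -(-θ₁ + θ₂ + θ₃) := by ring
  rw [χs, χsHalf, h₁, h₂, h₃, h₄]
  simp only [Multiset.insert_eq_cons, Multiset.map_cons, Multiset.map_singleton]
  simp only [← Multiset.singleton_add]
  abel

/-- Three-qubit kernel generator `Q̃^S_{+,2}`:
`σ_1(χ•) ω⁷ + σ_2(χ•) ω⁶ + σ_4(χ•) ω⁴ + σ_6(χ•) ω²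
  = 2ω² (3σ_1⁴(4σ_2+ω²) + 8σ_3σ_1(4σ_2+ω²) - 2σ_1²(6σ_2ω² + 8σ_2² + ω⁴)
    + 4(σ_2ω⁴ + 2σ_2²ω² - 8σ_3²) - 2σ_1⁶ - 16σ_3σ_1³)`. -/
theorem three_qubit_kernel_generator_plus_two :
    χs.esymm 1 * w ^ 7 + χs.esymm 2 * w ^ 6 + χs.esymm 4 * w ^ 4 + χs.esymm 6 * w ^ 2 =
      2 * w ^ 2 *
        (3 * s₁ ^ 4 * (4 * s₂ + w ^ 2) + 8 * s₃ * s₁ * (4 * s₂ + w ^ 2) -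
          2 * s₁ ^ 2 * (6 * s₂ * w ^ 2 + 8 * s₂ ^ 2 + w ^ 4) +
          4 * (s₂ * w ^ 4 + 2 * s₂ ^ 2 * w ^ 2 - 8 * s₃ ^ 2) -
          2 * s₁ ^ 6 - 16 * s₃ * s₁ ^ 3) := by
  have e₁ := χsHalf.esymm_add_map_neg_odd 0
  have e₂ := χsHalf.esymm_add_map_neg_even 1
  have e₄ := χsHalf.esymm_add_map_neg_even 2
  have e₆ := χsHalf.esymm_add_map_neg_even 3
  simp only [Nat.reduceMul, Nat.reduceAdd] at e₁ e₂ e₄ e₆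
  rw [χs_eq_add_map_neg, e₁, e₂, e₄, e₆]
  simp only [χsHalf, Multiset.insert_eq_cons, Multiset.map_cons,
    ← Multiset.cons_zero, Multiset.map_zero, Multiset.esymm_cons_succ, Multiset.esymm_zero_right,
    Multiset.esymm_zero_left_succ, s₁, s₂, s₃]
  ring
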